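/- The fundamental law of TLA+ functions: f = [x ∈ S ↦ e x] if and only if f is a function, the domain of f equals S, and for every x ∈ S, f applied to x equals e x. -/

import Mathlib

/-- A ZF set `f` is a TLA⁺ function: every element is an ordered pair, and the
first components determine the second. -/
def IsAFcn (f : ZFSet) : Prop :=
  (∀ p ∈ f, ∃ a b : ZFSet, p = a.pair b) ∧
    ∀ a b b' : ZFSet, a.pair b ∈ f → a.pair b' ∈ f → b = b'

/-- The domain of `f`: the set of first components of the pairs in `f`. -/
noncomputable def fdom (f : ZFSet) : ZFSet :=
  ZFSet.sep (fun a => ∃ b, a.pair b ∈ f) (ZFSet.sUnion (ZFSet.sUnion f))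

/-- The explicit TLA⁺ function `[x ∈ S ↦ e x]`. -/
noncomputable def lam (S : ZFSet) (e : ZFSet → ZFSet) : ZFSet :=
  @ZFSet.image (fun x => x.pair (e x)) (Classical.allZFSetDefinable _) S

/-- Function application via Hilbert choice. -/
noncomputable def fapp (f a : ZFSet) : ZFSet :=
  Classical.epsilon (fun y => a.pair y ∈ f)

/-! Both `f` and `[x ∈ S ↦ e x]` consist of pairs only, so they are equal as soon as they
contain the same pairs; for a function `f`, the pair `⟨a, b⟩` lies in `f` exactly when
`a ∈ dom f` and `f[a] = b`, and the three conditions on the right say precisely that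
this matches membership in `[x ∈ S ↦ e x]`. -/

lemma mem_fdom {f a : ZFSet} : a ∈ fdom f ↔ ∃ b, a.pair b ∈ f := by
  simp only [fdom, ZFSet.mem_sep, ZFSet.mem_sUnion, and_iff_right_iff_imp]
  rintro ⟨b, hb⟩
  -- `⟨a, b⟩ = {{a}, {a, b}}`, so `a ∈ {a} ∈ ⟨a, b⟩ ∈ f`.
  exact ⟨{a}, ⟨_, hb, by simp [ZFSet.pair]⟩, by simp⟩

lemma mem_lam {S p : ZFSet} {e : ZFSet → ZFSet} :
    p ∈ lam S e ↔ ∃ x ∈ S, p = x.pair (e x) := by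
  simp [lam, ZFSet.mem_image, eq_comm]

lemma pair_mem_lam {S a b : ZFSet} {e : ZFSet → ZFSet} :
    a.pair b ∈ lam S e ↔ a ∈ S ∧ e a = b := by
  rw [mem_lam]
  constructor
  · rintro ⟨x, hx, h⟩
    obtain ⟨rfl, rfl⟩ := ZFSet.pair_injective h
    exact ⟨hx, rfl⟩
  · rintro ⟨ha, rfl⟩
    exact ⟨a, ha, rfl⟩

lemma IsAFcn.fapp_eq {f a b : ZFSet} (hf : IsAFcn f) (h : a.pair b ∈ f) : fapp f a = b :=
  hf.2 a _ b (Classical.epsilon_spec (p := fun y => a.pair y ∈ f) ⟨b, h⟩) h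

lemma IsAFcn.pair_mem_iff {f a b : ZFSet} (hf : IsAFcn f) :
    a.pair b ∈ f ↔ a ∈ fdom f ∧ fapp f a = b := by
  refine ⟨fun h => ⟨mem_fdom.2 ⟨b, h⟩, hf.fapp_eq h⟩, ?_⟩
  rintro ⟨ha, rfl⟩
  obtain ⟨b, hb⟩ := mem_fdom.1 ha
  rwa [hf.fapp_eq hb]

lemma IsAFcn.ext {f g : ZFSet} (hf : IsAFcn f) (hg : IsAFcn g)
    (h : ∀ a b : ZFSet, a.pair b ∈ f ↔ a.pair b ∈ g) : f = g := by
  ext p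
  constructor
  · intro hp
    obtain ⟨a, b, rfl⟩ := hf.1 p hp
    exact (h a b).1 hp
  · intro hp
    obtain ⟨a, b, rfl⟩ := hg.1 p hp
    exact (h a b).2 hp

lemma isAFcn_lam (S : ZFSet) (e : ZFSet → ZFSet) : IsAFcn (lam S e) := by
  refine ⟨fun p hp => ?_, fun a b b' hb hb' => ?_⟩
  · obtain ⟨x, -, rfl⟩ := mem_lam.1 hp
    exact ⟨_, _, rfl⟩
  · rw [← (pair_mem_lam.1 hb).2, (pair_mem_lam.1 hb').2]

lemma fdom_lam (S : ZFSet) (e : ZFSet → ZFSet) : fdom (lam S e) = S := by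
  ext a
  simp only [mem_fdom, pair_mem_lam, exists_and_left, exists_eq', and_true]

lemma fapp_lam {S x : ZFSet} (e : ZFSet → ZFSet) (hx : x ∈ S) : fapp (lam S e) x = e x :=
  (isAFcn_lam S e).fapp_eq (pair_mem_lam.2 ⟨hx, rfl⟩)

theorem stmt_13 (f S : ZFSet) (e : ZFSet → ZFSet) :
    f = lam S e ↔ IsAFcn f ∧ fdom f = S ∧ ∀ x ∈ S, fapp f x = e x := by
  constructor
  · rintro rfl
    exact ⟨isAFcn_lam S e, fdom_lam S e, fun x hx => fapp_lam e hx⟩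
  · rintro ⟨hf, rfl, happ⟩
    refine hf.ext (isAFcn_lam _ e) fun a b => ?_
    rw [hf.pair_mem_iff, pair_mem_lam]
    exact and_congr_right fun ha => by rw [happ a ha]
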